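/- If A ⊆ [0,1] is an interval and B₁, B₂ ⊆ ℝ are disjoint bounded intervals, then E[M(A) N(B₁) N(B₂)] = n³λ³μ² |A| Q_σ([0,1],B₁) Q_σ([0,1],B₂) + n²λ²μ² Q_σ(A,B₁) Q_σ([0,1],B₂) + n²λ²μ² Q_σ([0,1],B₁) Q_σ(A,B₂) + n²λ²μ² |A| Q_σ²([0,1],B₁,B₂) + nλμ² Q_σ²(A,B₁,B₂). -/

import Mathlib

open MeasureTheory Filter Set

noncomputable section

/-- Rescaled dispersal density `f_σ(z) = σ⁻¹ f(z/σ)`. -/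
def fdil (σ : ℝ) (f : ℝ → ℝ) (z : ℝ) : ℝ := σ⁻¹ * f (z / σ)

/-- The dispersal point-process model of Hoffmann–Trabs: `M` is a homogeneous Poisson
point process on `[0,1]` with intensity `n·λ·dx` and, conditionally on `M`, `N` is a Cox
point process on `ℝ` with intensity `μ (M ∗ f_σ)(y) dy`.  The joint law is characterized
through the joint Laplace functional (Campbell's formula). -/
structure IsDispersalModel {Ω : Type*} [MeasurableSpace Ω] (P : Measure Ω)
    (n : ℕ) (lam mu σ : ℝ) (f : ℝ → ℝ) (M N : Ω → Measure ℝ) : Prop where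
  prob : IsProbabilityMeasure P
  lam_pos : 0 < lam
  mu_pos : 0 < mu
  sigma_pos : 0 < σ
  sigma_le_one : σ ≤ 1
  f_meas : Measurable f
  f_nonneg : ∀ z, 0 ≤ f z
  f_prob : ∫ z, f z = 1
  M_meas : ∀ A : Set ℝ, MeasurableSet A → Measurable fun ω => M ω A
  N_meas : ∀ B : Set ℝ, MeasurableSet B → Measurable fun ω => N ω B
  M_carrier : ∀ ω, M ω (Set.Icc (0:ℝ) 1)ᶜ = 0
  M_finite : ∀ ω, IsFiniteMeasure (M ω)
  N_locFinite : ∀ ω (B : Set ℝ), Bornology.IsBounded B → N ω B < ⊤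
  laplace : ∀ g h : ℝ → ℝ, Measurable g → Measurable h →
    (∃ c, ∀ x, |g x| ≤ c) → (∃ c, ∀ y, |h y| ≤ c) →
    (∃ R, ∀ y : ℝ, R < |y| → h y = 0) →
    ∫ ω, Real.exp ((∫ x, g x ∂(M ω)) + ∫ y, h y ∂(N ω)) ∂P
      = Real.exp ((n : ℝ) * lam * ∫ x in Set.Icc (0:ℝ) 1,
          (Real.exp (g x + mu * ∫ y, (Real.exp (h y) - 1) * fdil σ f (y - x)) - 1))

/-- `Q_σ(A,B) = ∫_A ∫_B f_σ(y−x) dy dx`. -/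
def Qker (σ : ℝ) (f : ℝ → ℝ) (A B : Set ℝ) : ℝ := ∫ x in A, ∫ y in B, fdil σ f (y - x)

/-- `Q²_σ(A,B₁,B₂) = ∫_A ∫_{B₁} ∫_{B₂} f_σ(y₁−x) f_σ(y₂−x) dy₂ dy₁ dx`. -/
def Q2ker (σ : ℝ) (f : ℝ → ℝ) (A B₁ B₂ : Set ℝ) : ℝ :=
  ∫ x in A, ∫ y₁ in B₁, ∫ y₂ in B₂, fdil σ f (y₁ - x) * fdil σ f (y₂ - x)

end

/-! The joint Laplace functional, evaluated at the test functions `a·1_A` and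
`b·1_{B₁} + c·1_{B₂}`, gives the closed form
`E exp(a M(A) + b N(B₁) + c N(B₂)) = exp(nλ(∫₀¹ e^{a 1_A} e^{μ(e^b-1) q₁} e^{μ(e^c-1) q₂} - 1))`
with `q_i(x) = Q_σ({x}, B_i)`; disjointness of `B₁` and `B₂` is what splits the `N`-part into
the two factors. The mixed moment is then peeled off one variable at a time: for a weight
`w ≥ 0`, `t ↦ E[w e^{tX}]` is the moment generating function of `X` under `w·P`, so its
derivative at `0` is `E[w X]`. Differentiating in `c`, then `b`, then `a` and comparing with the
derivatives of the closed form yields the five terms. -/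

open Real ProbabilityTheory

section ExponentialMoments

variable {α : Type*} [MeasurableSpace α] {μ : Measure α}

lemma hasDerivAt_integral_mul_exp_mul {w X : α → ℝ} (hw : AEMeasurable w μ) (hw0 : 0 ≤ w)
    (hint : ∀ t, Integrable (fun a => w a * exp (t * X a)) μ) (t : ℝ) :
    HasDerivAt (fun t => ∫ a, w a * exp (t * X a) ∂μ)
      (∫ a, w a * (X a * exp (t * X a)) ∂μ) t := by
  have hw' : AEMeasurable (fun a => (w a).toNNReal) μ := hw.real_toNNReal
  have hsmul : ∀ a (r : ℝ), (w a).toNNReal • r = w a * r := fun a r => by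
    rw [NNReal.smul_def, smul_eq_mul, Real.coe_toNNReal _ (hw0 a)]
  have hset : integrableExpSet X (μ.withDensity fun a => (w a).toNNReal) = univ := by
    ext s
    simpa [integrableExpSet, integrable_withDensity_iff_integrable_smul₀ hw', hsmul] using hint s
  convert hasDerivAt_mgf (X := X) (μ := μ.withDensity fun a => (w a).toNNReal) (t := t)
    (by simp [hset]) using 1
  · ext s
    simp only [mgf, integral_withDensity_eq_integral_smul₀ hw', hsmul]
  · simp only [integral_withDensity_eq_integral_smul₀ hw', hsmul]

lemma integral_mul_eq_of_hasDerivAt {w X : α → ℝ} (hw : AEMeasurable w μ) (hw0 : 0 ≤ w)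
    (hint : ∀ t, Integrable (fun a => w a * exp (t * X a)) μ) {F : ℝ → ℝ} {F' : ℝ}
    (hF : ∀ t, ∫ a, w a * exp (t * X a) ∂μ = F t) (hF' : HasDerivAt F F' 0) :
    ∫ a, w a * X a ∂μ = F' := by
  have h := hasDerivAt_integral_mul_exp_mul hw hw0 hint 0
  simp only [funext hF, zero_mul, exp_zero, mul_one] at h
  exact h.unique hF'

lemma exp_mul_le_exp_abs {s v : ℝ} (h0 : 0 ≤ v) (h1 : v ≤ 1) : exp (s * v) ≤ exp |s| :=
  exp_le_exp.2 <| (mul_le_mul_of_nonneg_right (le_abs_self s) h0).trans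
    (mul_le_of_le_one_right (abs_nonneg s) h1)

lemma mul_exp_le_exp_add (z s : ℝ) : z * exp s ≤ exp (s + z) := by
  rw [exp_add, mul_comm (exp s)]
  exact mul_le_mul_of_nonneg_right (by linarith [add_one_le_exp z]) (exp_pos s).le

variable {u v : α → ℝ}

lemma MeasureTheory.Integrable.mul_exp_mul (hu : Integrable u μ) (hv : Measurable v)
    (hv0 : 0 ≤ v) (hv1 : v ≤ 1) (s : ℝ) : Integrable (fun a => u a * exp (s * v a)) μ :=
  hu.mul_bdd (hv.const_mul s).exp.aestronglyMeasurable <| ae_of_all _ fun a => by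
    rw [norm_of_nonneg (exp_pos _).le]
    exact exp_mul_le_exp_abs (hv0 a) (hv1 a)

lemma hasDerivAt_integral_mul_exp_mul_zero (hu : Integrable u μ) (hu0 : 0 ≤ u)
    (hv : Measurable v) (hv0 : 0 ≤ v) (hv1 : v ≤ 1) :
    HasDerivAt (fun t => ∫ a, u a * exp (t * v a) ∂μ) (∫ a, u a * v a ∂μ) 0 := by
  simpa only [zero_mul, exp_zero, mul_one] using
    hasDerivAt_integral_mul_exp_mul hu.aemeasurable hu0 (hu.mul_exp_mul hv hv0 hv1) 0

lemma hasDerivAt_integral_mul_exp_comp_mul (hu : Integrable u μ) (hu0 : 0 ≤ u)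
    (hv : Measurable v) (hv0 : 0 ≤ v) (hv1 : v ≤ 1) {γ : ℝ → ℝ} {γ' : ℝ}
    (hγ : HasDerivAt γ γ' 0) (hγ0 : γ 0 = 0) :
    HasDerivAt (fun t => ∫ a, u a * exp (γ t * v a) ∂μ) (γ' * ∫ a, u a * v a ∂μ) 0 := by
  rw [mul_comm]
  exact (hγ0 ▸ hasDerivAt_integral_mul_exp_mul_zero hu hu0 hv hv0 hv1).comp 0 hγ

lemma hasDerivAt_const_mul_exp_sub_one (c : ℝ) :
    HasDerivAt (fun t => c * (exp t - 1)) c 0 := by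
  simpa using ((hasDerivAt_exp 0).sub_const 1).const_mul c

end ExponentialMoments

lemma Bornology.IsBounded.exists_forall_abs_gt_notMem {s : Set ℝ} (hs : Bornology.IsBounded s) :
    ∃ R, ∀ y : ℝ, R < |y| → y ∉ s := by
  obtain ⟨R, hR⟩ := hs.subset_closedBall 0
  refine ⟨R, fun y hy hys => ?_⟩
  have := hR hys
  rw [Metric.mem_closedBall, Real.dist_eq, sub_zero] at this
  linarith

section Indicators

variable {α : Type*} {s t : Set α}

lemma abs_mul_indicator_one_le (a : ℝ) (x : α) : |a * s.indicator 1 x| ≤ |a| := by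
  rw [abs_mul]
  refine mul_le_of_le_one_right (abs_nonneg a) ?_
  by_cases hx : x ∈ s <;> simp [hx]

lemma exp_mul_indicator_add_mul_indicator_sub_one (hst : Disjoint s t) (b c : ℝ) (x : α) :
    exp (b * s.indicator 1 x + c * t.indicator 1 x) - 1
      = (exp b - 1) * s.indicator 1 x + (exp c - 1) * t.indicator 1 x := by
  by_cases hs : x ∈ s
  · simp [hs, hst.notMem_of_mem_left hs]
  · by_cases ht : x ∈ t <;> simp [hs, ht]

variable [MeasurableSpace α] {μ : Measure α}

lemma MeasureTheory.Integrable.mul_exp_mul_indicator_one {u : α → ℝ} (hu : Integrable u μ)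
    (ht : MeasurableSet t) (a : ℝ) :
    Integrable (fun x => u x * exp (a * t.indicator 1 x)) μ :=
  hu.mul_exp_mul (measurable_one.indicator ht) (indicator_nonneg fun _ _ => zero_le_one)
    (indicator_le_self' fun _ _ => zero_le_one) a

lemma integrable_exp_mul_indicator_one [IsFiniteMeasure μ] (ht : MeasurableSet t) (a : ℝ) :
    Integrable (fun x => exp (a * t.indicator 1 x)) μ := by
  simpa using (integrable_const (1 : ℝ)).mul_exp_mul_indicator_one ht a

lemma integral_mul_indicator_add_mul_indicator (hs : MeasurableSet s) (ht : MeasurableSet t)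
    (hμs : μ s ≠ ⊤) (hμt : μ t ≠ ⊤) (b c : ℝ) :
    ∫ x, (b * s.indicator 1 x + c * t.indicator 1 x) ∂μ
      = b * (μ s).toReal + c * (μ t).toReal := by
  have hint : ∀ {r : Set α}, MeasurableSet r → μ r ≠ ⊤ → Integrable (r.indicator 1) μ :=
    fun hr hμr => (integrable_indicator_iff hr).2 (integrableOn_const (C := (1 : ℝ)) hμr)
  rw [integral_add ((hint hs hμs).const_mul b) ((hint ht hμt).const_mul c), integral_const_mul,
    integral_const_mul, integral_indicator_one hs, integral_indicator_one ht, measureReal_def,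
    measureReal_def]

lemma integral_mul_indicator_add_mul_indicator_mul (hs : MeasurableSet s)
    (ht : MeasurableSet t) {k : α → ℝ} (hk : Integrable k μ) (b c : ℝ) :
    ∫ x, (b * s.indicator 1 x + c * t.indicator 1 x) * k x ∂μ
      = b * ∫ x in s, k x ∂μ + c * ∫ x in t, k x ∂μ := by
  have hind : ∀ r : Set α, ∀ x, r.indicator 1 x * k x = r.indicator k x := fun r x => by
    by_cases hx : x ∈ r <;> simp [hx]
  simp_rw [add_mul, mul_assoc, hind]
  rw [integral_add ((hk.indicator hs).const_mul b) ((hk.indicator ht).const_mul c),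
    integral_const_mul, integral_const_mul, integral_indicator hs, integral_indicator ht]

lemma setIntegral_mul_indicator_one (ht : MeasurableSet t) (hts : t ⊆ s) (u : α → ℝ) :
    ∫ x in s, u x * t.indicator 1 x ∂μ = ∫ x in t, u x ∂μ := by
  simp_rw [← indicator_mul_right, Pi.one_apply, mul_one]
  rw [integral_indicator ht, Measure.restrict_restrict ht, inter_eq_self_of_subset_left hts]

lemma hasDerivAt_setIntegral_mul_exp_mul_indicator_one (ht : MeasurableSet t) (hts : t ⊆ s)
    {u : α → ℝ} (hu : IntegrableOn u s μ) (hu0 : 0 ≤ u) :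
    HasDerivAt (fun a => ∫ x in s, u x * exp (a * t.indicator 1 x) ∂μ) (∫ x in t, u x ∂μ) 0 := by
  rw [← setIntegral_mul_indicator_one ht hts]
  exact hasDerivAt_integral_mul_exp_mul_zero hu hu0 (measurable_one.indicator ht)
    (indicator_nonneg fun _ _ => zero_le_one) (indicator_le_self' fun _ _ => zero_le_one)

end Indicators

section DispersalKernel

variable {σ : ℝ} {f : ℝ → ℝ}

/-- `Q_σ({x}, B)`, the probability that an offspring of a parent at `x` lands in `B`. -/
noncomputable def dispersalProb (σ : ℝ) (f : ℝ → ℝ) (B : Set ℝ) (x : ℝ) : ℝ :=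
  ∫ y in B, fdil σ f (y - x)

lemma measurable_fdil (hf : Measurable f) : Measurable (fdil σ f) :=
  (hf.comp (measurable_id.div_const σ)).const_mul _

lemma fdil_nonneg (hσ : 0 ≤ σ) (hf0 : ∀ z, 0 ≤ f z) (z : ℝ) : 0 ≤ fdil σ f z :=
  mul_nonneg (inv_nonneg.2 hσ) (hf0 _)

lemma MeasureTheory.Integrable.fdil (hf : Integrable f) (hσ : σ ≠ 0) :
    Integrable (fdil σ f) :=
  (hf.comp_div hσ).const_mul _

lemma integral_fdil (hσ : 0 < σ) : ∫ z, fdil σ f z = ∫ z, f z := by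
  simp only [fdil]
  rw [integral_const_mul, Measure.integral_comp_div f σ, abs_of_pos hσ, smul_eq_mul,
    inv_mul_cancel_left₀ hσ.ne']

lemma measurable_dispersalProb (hf : Measurable f) (B : Set ℝ) :
    Measurable (dispersalProb σ f B) :=
  (((measurable_fdil hf).comp (measurable_snd.sub measurable_fst)).stronglyMeasurable
    |>.integral_prod_right' (ν := volume.restrict B)
      (f := fun p : ℝ × ℝ => fdil σ f (p.2 - p.1))).measurable

lemma dispersalProb_nonneg (hσ : 0 ≤ σ) (hf0 : ∀ z, 0 ≤ f z) (B : Set ℝ) :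
    0 ≤ dispersalProb σ f B := fun _ =>
  integral_nonneg fun _ => fdil_nonneg hσ hf0 _

lemma integrable_fdil_sub_of_integral_eq_one (hσ : 0 < σ) (hf1 : ∫ z, f z = 1) (x : ℝ) :
    Integrable (fun y => fdil σ f (y - x)) :=
  ((Integrable.of_integral_ne_zero (f := f) (by simp [hf1])).fdil hσ.ne').comp_sub_right x

lemma dispersalProb_le_one (hσ : 0 < σ) (hf0 : ∀ z, 0 ≤ f z) (hf1 : ∫ z, f z = 1)
    (B : Set ℝ) : dispersalProb σ f B ≤ 1 := fun x =>
  calc dispersalProb σ f B x ≤ ∫ y, fdil σ f (y - x) :=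
        setIntegral_le_integral (integrable_fdil_sub_of_integral_eq_one hσ hf1 x)
          (ae_of_all _ fun y => fdil_nonneg hσ.le hf0 _)
    _ = 1 := by rw [integral_sub_right_eq_self (fdil σ f) x, integral_fdil hσ, hf1]

lemma integral_exp_sub_one_mul_fdil_sub {B₁ B₂ : Set ℝ} (hσ : 0 < σ) (hf1 : ∫ z, f z = 1)
    (hB₁ : MeasurableSet B₁) (hB₂ : MeasurableSet B₂) (hB : Disjoint B₁ B₂) (b c x : ℝ) :
    ∫ y, (exp (b * B₁.indicator 1 y + c * B₂.indicator 1 y) - 1) * fdil σ f (y - x)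
      = (exp b - 1) * dispersalProb σ f B₁ x + (exp c - 1) * dispersalProb σ f B₂ x := by
  simp_rw [exp_mul_indicator_add_mul_indicator_sub_one hB]
  exact integral_mul_indicator_add_mul_indicator_mul hB₁ hB₂
    (integrable_fdil_sub_of_integral_eq_one hσ hf1 x) _ _

lemma Qker_eq_integral_dispersalProb (A B : Set ℝ) :
    Qker σ f A B = ∫ x in A, dispersalProb σ f B x := rfl

lemma Q2ker_eq_integral_dispersalProb_mul (A B₁ B₂ : Set ℝ) :
    Q2ker σ f A B₁ B₂ = ∫ x in A, dispersalProb σ f B₁ x * dispersalProb σ f B₂ x := by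
  simp only [Q2ker, dispersalProb, integral_const_mul, integral_mul_const]

end DispersalKernel

namespace IsDispersalModel

variable {Ω : Type*} [MeasurableSpace Ω] {P : Measure Ω} {n : ℕ} {lam mu σ : ℝ} {f : ℝ → ℝ}
  {M N : Ω → Measure ℝ} {A B₁ B₂ : Set ℝ}

protected lemma measurable_dispersalProb (model : IsDispersalModel P n lam mu σ f M N)
    (B : Set ℝ) : Measurable (dispersalProb σ f B) :=
  measurable_dispersalProb model.f_meas B

protected lemma dispersalProb_nonneg (model : IsDispersalModel P n lam mu σ f M N)
    (B : Set ℝ) : 0 ≤ dispersalProb σ f B :=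
  dispersalProb_nonneg model.sigma_pos.le model.f_nonneg B

protected lemma dispersalProb_le_one (model : IsDispersalModel P n lam mu σ f M N)
    (B : Set ℝ) : dispersalProb σ f B ≤ 1 :=
  dispersalProb_le_one model.sigma_pos model.f_nonneg model.f_prob B

protected lemma integrable_dispersalProb (model : IsDispersalModel P n lam mu σ f M N)
    {μ : Measure ℝ} [IsFiniteMeasure μ] (B : Set ℝ) : Integrable (dispersalProb σ f B) μ :=
  .of_bound (model.measurable_dispersalProb B).aestronglyMeasurable 1 <| ae_of_all _ fun x => by
    rw [Real.norm_of_nonneg (model.dispersalProb_nonneg B x)]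
    exact model.dispersalProb_le_one B x

protected lemma integrable_mul_exp_mul_dispersalProb
    (model : IsDispersalModel P n lam mu σ f M N) {μ : Measure ℝ} {u : ℝ → ℝ}
    (hu : Integrable u μ) (B : Set ℝ) (s : ℝ) :
    Integrable (fun x => u x * exp (s * dispersalProb σ f B x)) μ :=
  hu.mul_exp_mul (model.measurable_dispersalProb B) (model.dispersalProb_nonneg B)
    (model.dispersalProb_le_one B) s

theorem integral_exp_count (model : IsDispersalModel P n lam mu σ f M N)
    (hA : MeasurableSet A) (hB₁ : MeasurableSet B₁) (hB₂ : MeasurableSet B₂)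
    (hB₁bdd : Bornology.IsBounded B₁) (hB₂bdd : Bornology.IsBounded B₂) (hB : Disjoint B₁ B₂)
    (a b c : ℝ) :
    ∫ ω, exp (a * (M ω A).toReal + b * (N ω B₁).toReal + c * (N ω B₂).toReal) ∂P
      = exp (n * lam * ((∫ x in Icc 0 1, exp (a * A.indicator 1 x)
          * exp (mu * (exp b - 1) * dispersalProb σ f B₁ x)
          * exp (mu * (exp c - 1) * dispersalProb σ f B₂ x)) - 1)) := by
  set g : ℝ → ℝ := fun x => a * A.indicator 1 x
  set h : ℝ → ℝ := fun y => b * B₁.indicator 1 y + c * B₂.indicator 1 y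
  have h_supp : ∃ R, ∀ y : ℝ, R < |y| → h y = 0 := by
    obtain ⟨R, hR⟩ := (hB₁bdd.union hB₂bdd).exists_forall_abs_gt_notMem
    refine ⟨R, fun y hy => ?_⟩
    obtain ⟨hy₁, hy₂⟩ := not_or.1 (hR y hy)
    simp [h, hy₁, hy₂]
  have hL := model.laplace g h ((measurable_one.indicator hA).const_mul a)
    (((measurable_one.indicator hB₁).const_mul b).add
      ((measurable_one.indicator hB₂).const_mul c))
    ⟨|a|, abs_mul_indicator_one_le a⟩
    ⟨|b| + |c|, fun y => (abs_add_le _ _).trans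
      (add_le_add (abs_mul_indicator_one_le b y) (abs_mul_indicator_one_le c y))⟩ h_supp
  have hM : ∀ ω, ∫ x, g x ∂M ω = a * (M ω A).toReal := fun ω => by
    rw [integral_const_mul, integral_indicator_one hA, measureReal_def]
  have hN : ∀ ω, ∫ y, h y ∂N ω = b * (N ω B₁).toReal + c * (N ω B₂).toReal := fun ω =>
    integral_mul_indicator_add_mul_indicator hB₁ hB₂ (model.N_locFinite ω B₁ hB₁bdd).ne
      (model.N_locFinite ω B₂ hB₂bdd).ne b c
  set F : ℝ → ℝ := fun x => exp (a * A.indicator 1 x)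
      * exp (mu * (exp b - 1) * dispersalProb σ f B₁ x)
      * exp (mu * (exp c - 1) * dispersalProb σ f B₂ x)
  have hF : Integrable F (volume.restrict (Icc 0 1)) :=
    model.integrable_mul_exp_mul_dispersalProb
      (model.integrable_mul_exp_mul_dispersalProb (integrable_exp_mul_indicator_one hA a) B₁ _) B₂ _
  have hF_sub : ∫ x in Icc 0 1, (F x - 1) = (∫ x in Icc 0 1, F x) - 1 := by
    rw [integral_sub hF (integrable_const 1)]
    simp
  calc _ = ∫ ω, exp ((∫ x, g x ∂M ω) + ∫ y, h y ∂N ω) ∂P := by simp only [hM, hN, add_assoc]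
    _ = _ := hL
    _ = _ := by
      rw [← hF_sub]
      refine congrArg (fun t => exp (n * lam * t)) (integral_congr_ae (ae_of_all _ fun x => ?_))
      simp only [F, g, h, integral_exp_sub_one_mul_fdil_sub model.sigma_pos model.f_prob hB₁ hB₂ hB,
        ← exp_add]
      ring_nf

theorem integrable_exp_count (model : IsDispersalModel P n lam mu σ f M N)
    (hA : MeasurableSet A) (hB₁ : MeasurableSet B₁) (hB₂ : MeasurableSet B₂)
    (hB₁bdd : Bornology.IsBounded B₁) (hB₂bdd : Bornology.IsBounded B₂) (hB : Disjoint B₁ B₂)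
    (a b c : ℝ) :
    Integrable
      (fun ω => exp (a * (M ω A).toReal + b * (N ω B₁).toReal + c * (N ω B₂).toReal)) P :=
  .of_integral_ne_zero <| by
    rw [model.integral_exp_count hA hB₁ hB₂ hB₁bdd hB₂bdd hB]
    exact (exp_pos _).ne'

theorem integrable_count_mul_exp_count (model : IsDispersalModel P n lam mu σ f M N)
    (hA : MeasurableSet A) (hB₁ : MeasurableSet B₁) (hB₂ : MeasurableSet B₂)
    (hB₁bdd : Bornology.IsBounded B₁) (hB₂bdd : Bornology.IsBounded B₂) (hB : Disjoint B₁ B₂)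
    (a b : ℝ) :
    Integrable (fun ω => (N ω B₂).toReal * exp (a * (M ω A).toReal + b * (N ω B₁).toReal)) P :=
  (model.integrable_exp_count hA hB₁ hB₂ hB₁bdd hB₂bdd hB a b 1).mono'
    ((model.N_meas B₂ hB₂).ennreal_toReal.mul (((model.M_meas A hA).ennreal_toReal.const_mul a).add
      ((model.N_meas B₁ hB₁).ennreal_toReal.const_mul b)).exp).aestronglyMeasurable
    (ae_of_all _ fun ω => by
      rw [norm_of_nonneg (by positivity), one_mul]
      exact mul_exp_le_exp_add _ _)

theorem integral_exp_count_mul_count (model : IsDispersalModel P n lam mu σ f M N)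
    (hA : MeasurableSet A) (hB₁ : MeasurableSet B₁) (hB₂ : MeasurableSet B₂)
    (hB₁bdd : Bornology.IsBounded B₁) (hB₂bdd : Bornology.IsBounded B₂) (hB : Disjoint B₁ B₂)
    (a b : ℝ) :
    ∫ ω, exp (a * (M ω A).toReal + b * (N ω B₁).toReal) * (N ω B₂).toReal ∂P
      = exp (n * lam * ((∫ x in Icc 0 1, exp (a * A.indicator 1 x)
          * exp (mu * (exp b - 1) * dispersalProb σ f B₁ x)) - 1))
        * (n * lam * (mu * ∫ x in Icc 0 1, dispersalProb σ f B₂ x * exp (a * A.indicator 1 x)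
          * exp (mu * (exp b - 1) * dispersalProb σ f B₁ x))) := by
  have hderiv := (((hasDerivAt_integral_mul_exp_comp_mul (μ := volume.restrict (Icc 0 1))
    (model.integrable_mul_exp_mul_dispersalProb (integrable_exp_mul_indicator_one hA a) B₁
      (mu * (exp b - 1)))
    (fun x => by positivity) (model.measurable_dispersalProb B₂) (model.dispersalProb_nonneg B₂)
    (model.dispersalProb_le_one B₂) (hasDerivAt_const_mul_exp_sub_one mu)
    (by simp)).sub_const 1).const_mul (n * lam)).exp
  refine (integral_mul_eq_of_hasDerivAt (X := fun ω => (N ω B₂).toReal) ?_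
    (fun ω => by positivity) (fun c => ?_) (fun c => ?_) hderiv).trans ?_
  · exact (((model.M_meas A hA).ennreal_toReal.const_mul a).add
      ((model.N_meas B₁ hB₁).ennreal_toReal.const_mul b)).exp.aemeasurable
  · simpa only [← exp_add] using model.integrable_exp_count hA hB₁ hB₂ hB₁bdd hB₂bdd hB a b c
  · refine (integral_congr_ae (ae_of_all _ fun ω => ?_)).trans
      (model.integral_exp_count hA hB₁ hB₂ hB₁bdd hB₂bdd hB a b c)
    exact (exp_add _ _).symm
  · have hcomm : ∀ x, exp (a * A.indicator 1 x) * exp (mu * (exp b - 1) * dispersalProb σ f B₁ x)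
        * dispersalProb σ f B₂ x = dispersalProb σ f B₂ x * exp (a * A.indicator 1 x)
          * exp (mu * (exp b - 1) * dispersalProb σ f B₁ x) :=
      fun x => by ring
    simp only [exp_zero, sub_self, mul_zero, zero_mul, mul_one, hcomm]

theorem integral_exp_count_mul_count_mul_count (model : IsDispersalModel P n lam mu σ f M N)
    (hA : MeasurableSet A) (hB₁ : MeasurableSet B₁) (hB₂ : MeasurableSet B₂)
    (hB₁bdd : Bornology.IsBounded B₁) (hB₂bdd : Bornology.IsBounded B₂) (hB : Disjoint B₁ B₂)
    (a : ℝ) :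
    ∫ ω, exp (a * (M ω A).toReal) * (N ω B₂).toReal * (N ω B₁).toReal ∂P
      = exp (n * lam * ((∫ x in Icc 0 1, exp (a * A.indicator 1 x)) - 1))
        * (n * lam * (mu * ∫ x in Icc 0 1, dispersalProb σ f B₁ x * exp (a * A.indicator 1 x))
            * (n * lam * (mu * ∫ x in Icc 0 1,
                dispersalProb σ f B₂ x * exp (a * A.indicator 1 x)))
          + n * lam * (mu * (mu * ∫ x in Icc 0 1,
              dispersalProb σ f B₁ x * dispersalProb σ f B₂ x * exp (a * A.indicator 1 x)))) := by
  have hderiv₁ := (((hasDerivAt_integral_mul_exp_comp_mul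
    (integrable_exp_mul_indicator_one (μ := volume.restrict (Icc 0 1)) hA a)
    (fun x => by positivity) (model.measurable_dispersalProb B₁) (model.dispersalProb_nonneg B₁)
    (model.dispersalProb_le_one B₁) (hasDerivAt_const_mul_exp_sub_one mu)
    (by simp)).sub_const 1).const_mul (n * lam)).exp
  have hderiv₂ := ((hasDerivAt_integral_mul_exp_comp_mul
    ((model.integrable_dispersalProb (μ := volume.restrict (Icc 0 1)) B₂).mul_exp_mul_indicator_one
      hA a)
    (fun x => mul_nonneg (model.dispersalProb_nonneg B₂ x) (exp_pos _).le)
    (model.measurable_dispersalProb B₁) (model.dispersalProb_nonneg B₁)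
    (model.dispersalProb_le_one B₁) (hasDerivAt_const_mul_exp_sub_one mu)
    (by simp)).const_mul mu).const_mul (n * lam)
  refine (integral_mul_eq_of_hasDerivAt (X := fun ω => (N ω B₁).toReal) ?_
    (fun ω => by positivity) (fun b => ?_) (fun b => ?_) (hderiv₁.mul hderiv₂)).trans ?_
  · exact (((model.M_meas A hA).ennreal_toReal.const_mul a).exp.mul
      (model.N_meas B₂ hB₂).ennreal_toReal).aemeasurable
  · refine (model.integrable_count_mul_exp_count hA hB₁ hB₂ hB₁bdd hB₂bdd hB a b).congr
      (ae_of_all _ fun ω => ?_)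
    simp only [exp_add]
    ring
  · rw [Pi.mul_apply, ← model.integral_exp_count_mul_count hA hB₁ hB₂ hB₁bdd hB₂bdd hB a b]
    refine integral_congr_ae (ae_of_all _ fun ω => ?_)
    simp only [exp_add]
    ring
  · have hcomm : ∀ x, dispersalProb σ f B₂ x * exp (a * A.indicator 1 x) * dispersalProb σ f B₁ x
        = dispersalProb σ f B₁ x * dispersalProb σ f B₂ x * exp (a * A.indicator 1 x) :=
      fun x => by ring
    simp only [exp_zero, sub_self, mul_zero, zero_mul, mul_one, hcomm,
      mul_comm (exp _) (dispersalProb _ _ _ _)]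
    ring

theorem hasDerivAt_integral_exp_count_mul_count_mul_count
    (model : IsDispersalModel P n lam mu σ f M N) (hA : MeasurableSet A) (hAsub : A ⊆ Icc 0 1)
    (hB₁ : MeasurableSet B₁) (hB₂ : MeasurableSet B₂)
    (hB₁bdd : Bornology.IsBounded B₁) (hB₂bdd : Bornology.IsBounded B₂) (hB : Disjoint B₁ B₂) :
    HasDerivAt (fun a => ∫ ω, exp (a * (M ω A).toReal) * (N ω B₂).toReal * (N ω B₁).toReal ∂P)
      ((n : ℝ)^3 * lam^3 * mu^2 * (volume A).toReal
          * Qker σ f (Icc 0 1) B₁ * Qker σ f (Icc 0 1) B₂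
        + (n : ℝ)^2 * lam^2 * mu^2 * Qker σ f A B₁ * Qker σ f (Icc 0 1) B₂
        + (n : ℝ)^2 * lam^2 * mu^2 * Qker σ f (Icc 0 1) B₁ * Qker σ f A B₂
        + (n : ℝ)^2 * lam^2 * mu^2 * (volume A).toReal * Q2ker σ f (Icc 0 1) B₁ B₂
        + (n : ℝ) * lam * mu^2 * Q2ker σ f A B₁ B₂) 0 := by
  have hind := fun (u : ℝ → ℝ) (hu : IntegrableOn u (Icc 0 1)) (hu0 : 0 ≤ u) =>
    hasDerivAt_setIntegral_mul_exp_mul_indicator_one hA hAsub hu hu0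
  have h₀ : HasDerivAt (fun a => ∫ x in Icc 0 1, exp (a * A.indicator 1 x)) (volume.real A) 0 :=
    by simpa using hind 1 (integrableOn_const (by simp)) zero_le_one
  have h₁ := hind _ (model.integrable_dispersalProb B₁) (model.dispersalProb_nonneg B₁)
  have h₂ := hind _ (model.integrable_dispersalProb B₂) (model.dispersalProb_nonneg B₂)
  have h₁₂ := hind (fun x => dispersalProb σ f B₁ x * dispersalProb σ f B₂ x)
    ((model.integrable_dispersalProb B₁).mul_bdd
      (model.measurable_dispersalProb B₂).aestronglyMeasurable (ae_of_all _ fun x => by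
        rw [Real.norm_of_nonneg (model.dispersalProb_nonneg B₂ x)]
        exact model.dispersalProb_le_one B₂ x))
    (fun x => mul_nonneg (model.dispersalProb_nonneg B₁ x) (model.dispersalProb_nonneg B₂ x))
  rw [funext (model.integral_exp_count_mul_count_mul_count hA hB₁ hB₂ hB₁bdd hB₂bdd hB)]
  refine (((h₀.sub_const 1).const_mul (n * lam)).exp.mul
    ((((h₁.const_mul mu).const_mul (n * lam)).mul ((h₂.const_mul mu).const_mul (n * lam))).add
      (((h₁₂.const_mul mu).const_mul mu).const_mul (n * lam)))).congr_deriv ?_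
  have h_one : ∫ _ in Icc (0 : ℝ) 1, (1 : ℝ) = 1 := by simp
  simp only [Pi.mul_apply, Pi.add_apply, zero_mul, exp_zero, mul_one, h_one, sub_self, mul_zero,
    ← Qker_eq_integral_dispersalProb, ← Q2ker_eq_integral_dispersalProb_mul, measureReal_def]
  ring

end IsDispersalModel

theorem dispersal_third_moment_MNN_general
    {Ω : Type*} [MeasurableSpace Ω] (P : Measure Ω)
    (n : ℕ) (lam mu σ : ℝ) (f : ℝ → ℝ) (M N : Ω → Measure ℝ)
    (model : IsDispersalModel P n lam mu σ f M N)
    (A B₁ B₂ : Set ℝ)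
    (hAmeas : MeasurableSet A) (hAsub : A ⊆ Set.Icc (0:ℝ) 1)
    (hB₁meas : MeasurableSet B₁) (hB₂meas : MeasurableSet B₂)
    (hB₁bdd : Bornology.IsBounded B₁) (hB₂bdd : Bornology.IsBounded B₂)
    (hBdisj : Disjoint B₁ B₂) :
    ∫ ω, (M ω A).toReal * (N ω B₁).toReal * (N ω B₂).toReal ∂P
      = (n : ℝ)^3 * lam^3 * mu^2 * (volume A).toReal
          * Qker σ f (Set.Icc (0:ℝ) 1) B₁ * Qker σ f (Set.Icc (0:ℝ) 1) B₂
        + (n : ℝ)^2 * lam^2 * mu^2 * Qker σ f A B₁ * Qker σ f (Set.Icc (0:ℝ) 1) B₂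
        + (n : ℝ)^2 * lam^2 * mu^2 * Qker σ f (Set.Icc (0:ℝ) 1) B₁ * Qker σ f A B₂
        + (n : ℝ)^2 * lam^2 * mu^2 * (volume A).toReal * Q2ker σ f (Set.Icc (0:ℝ) 1) B₁ B₂
        + (n : ℝ) * lam * mu^2 * Q2ker σ f A B₁ B₂ := by
  have hY := (model.N_meas B₁ hB₁meas).ennreal_toReal
  have hZ := (model.N_meas B₂ hB₂meas).ennreal_toReal
  have hint (a : ℝ) : Integrable
      (fun ω => (N ω B₂).toReal * (N ω B₁).toReal * exp (a * (M ω A).toReal)) P := by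
    refine (model.integrable_count_mul_exp_count hAmeas hB₁meas hB₂meas hB₁bdd hB₂bdd hBdisj
      a 1).mono' ((hZ.mul hY).mul ((model.M_meas A hAmeas).ennreal_toReal.const_mul a).exp
        ).aestronglyMeasurable (ae_of_all _ fun ω => ?_)
    rw [norm_of_nonneg (by positivity), one_mul, mul_assoc]
    exact mul_le_mul_of_nonneg_left (mul_exp_le_exp_add _ _) (by positivity)
  calc _ = ∫ ω, (N ω B₂).toReal * (N ω B₁).toReal * (M ω A).toReal ∂P :=
        integral_congr_ae (ae_of_all _ fun ω => by ring)
    _ = _ := integral_mul_eq_of_hasDerivAt (w := fun ω => (N ω B₂).toReal * (N ω B₁).toReal)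
      (hZ.mul hY).aemeasurable (fun ω => by positivity) hint
      (fun a => integral_congr_ae (ae_of_all _ fun ω => by ring))
      (model.hasDerivAt_integral_exp_count_mul_count_mul_count hAmeas hAsub hB₁meas hB₂meas
        hB₁bdd hB₂bdd hBdisj)

/-- Lemma 16(iii): mixed third moment `E[M(A)N(B₁)N(B₂)]`. -/
theorem dispersal_third_moment_MNN
    {Ω : Type*} [MeasurableSpace Ω] (P : Measure Ω)
    (n : ℕ) (lam mu σ : ℝ) (f : ℝ → ℝ) (M N : Ω → Measure ℝ)
    (model : IsDispersalModel P n lam mu σ f M N)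
    (A B₁ B₂ : Set ℝ)
    (hAmeas : MeasurableSet A) (hAint : A.OrdConnected) (hAsub : A ⊆ Set.Icc (0:ℝ) 1)
    (hB₁meas : MeasurableSet B₁) (hB₂meas : MeasurableSet B₂)
    (hB₁int : B₁.OrdConnected) (hB₂int : B₂.OrdConnected)
    (hB₁bdd : Bornology.IsBounded B₁) (hB₂bdd : Bornology.IsBounded B₂)
    (hBdisj : Disjoint B₁ B₂) :
    ∫ ω, (M ω A).toReal * (N ω B₁).toReal * (N ω B₂).toReal ∂P
      = (n : ℝ)^3 * lam^3 * mu^2 * (volume A).toReal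
          * Qker σ f (Set.Icc (0:ℝ) 1) B₁ * Qker σ f (Set.Icc (0:ℝ) 1) B₂
        + (n : ℝ)^2 * lam^2 * mu^2 * Qker σ f A B₁ * Qker σ f (Set.Icc (0:ℝ) 1) B₂
        + (n : ℝ)^2 * lam^2 * mu^2 * Qker σ f (Set.Icc (0:ℝ) 1) B₁ * Qker σ f A B₂
        + (n : ℝ)^2 * lam^2 * mu^2 * (volume A).toReal * Q2ker σ f (Set.Icc (0:ℝ) 1) B₁ B₂
        + (n : ℝ) * lam * mu^2 * Q2ker σ f A B₁ B₂ :=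
  dispersal_third_moment_MNN_general P n lam mu σ f M N model A B₁ B₂ hAmeas hAsub hB₁meas hB₂meas
    hB₁bdd hB₂bdd hBdisj
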